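/- In the Grandparent graph GP with height function h(k,f) = k and any fixed vertex o: the only bridge of span 0 starting at o is the length-0 walk; there are exactly 2 bridges of span 1 starting at o, both of length 1; and the number of bridges of span 2 and length n starting at o equals 4 for each n ∈ {1, 2, 3} and 0 for every other n. Equivalently, ℬ_0(x) = 1, ℬ_1(x) = 2x and ℬ_2(x) = 4x + 4x² + 4x³, where ℬ_a(x) = Σ_{n≥0} b_n(a)·x^n and b_n(a) is the number of bridges of length n and span a starting at o. -/

import Mathlib

open Filter Finset

noncomputable section

variable {V : Type*}

/-- `w : ℕ → V` represents a walk of length `n` from `v`: consecutive vertices are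
adjacent and the values are pinned to `w n` from index `n` on. -/
noncomputable def IsWalkFrom (G : SimpleGraph V) (n : ℕ) (v : V) (w : ℕ → V) : Prop :=
  w 0 = v ∧ (∀ i < n, G.Adj (w i) (w (i + 1))) ∧ (∀ i, n ≤ i → w i = w n)

/-- A self-avoiding walk of length `n` starting at `v`. -/
noncomputable def IsSAWFrom (G : SimpleGraph V) (n : ℕ) (v : V) (w : ℕ → V) : Prop :=
  IsWalkFrom G n v w ∧ Set.InjOn w (Set.Iic n)

/-- A bridge with respect to the height function `h`. -/
noncomputable def IsBridgeFrom (G : SimpleGraph V) (h : V → ℤ) (n : ℕ) (v : V) (w : ℕ → V) : Prop :=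
  IsSAWFrom G n v w ∧ ∀ i, 1 ≤ i → i ≤ n → h (w 0) < h (w i) ∧ h (w i) ≤ h (w n)

/-- A reversed bridge with respect to the height function `h`. -/
noncomputable def IsRBridgeFrom (G : SimpleGraph V) (h : V → ℤ) (n : ℕ) (v : V) (w : ℕ → V) : Prop :=
  IsSAWFrom G n v w ∧ ∀ i, 1 ≤ i → i ≤ n → h (w 0) > h (w i) ∧ h (w i) ≥ h (w n)

/-- A half-space walk with respect to the height function `h`. -/
noncomputable def IsHSWFrom (G : SimpleGraph V) (h : V → ℤ) (n : ℕ) (v : V) (w : ℕ → V) : Prop :=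
  IsSAWFrom G n v w ∧ ∀ i, 1 ≤ i → i ≤ n → h (w 0) < h (w i)

/-- The span of (the first `n+1` vertices of) a walk. -/
noncomputable def walkSpan (h : V → ℤ) (n : ℕ) (w : ℕ → V) : ℤ :=
  ((Finset.range (n + 1)).sup' ⟨0, by simp⟩ fun i => h (w i)) -
    ((Finset.range (n + 1)).inf' ⟨0, by simp⟩ fun i => h (w i))

/-- Number of SAWs of length `n` starting at `v`. -/
noncomputable def sawCount (G : SimpleGraph V) (n : ℕ) (v : V) : ℕ :=
  Nat.card {w : ℕ → V // IsSAWFrom G n v w}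

/-- Number of bridges of length `n` starting at `v`. -/
noncomputable def bridgeCount (G : SimpleGraph V) (h : V → ℤ) (n : ℕ) (v : V) : ℕ :=
  Nat.card {w : ℕ → V // IsBridgeFrom G h n v w}

/-- Number of reversed bridges of length `n` starting at `v`. -/
noncomputable def rbridgeCount (G : SimpleGraph V) (h : V → ℤ) (n : ℕ) (v : V) : ℕ :=
  Nat.card {w : ℕ → V // IsRBridgeFrom G h n v w}

/-- Number of half-space walks of length `n` starting at `v`. -/
noncomputable def hswCount (G : SimpleGraph V) (h : V → ℤ) (n : ℕ) (v : V) : ℕ :=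
  Nat.card {w : ℕ → V // IsHSWFrom G h n v w}

/-- Number of bridges of length `n` and span `a` starting at `v`. -/
noncomputable def bridgeSpanCount (G : SimpleGraph V) (h : V → ℤ) (n : ℕ) (v : V) (a : ℤ) : ℕ :=
  Nat.card {w : ℕ → V // IsBridgeFrom G h n v w ∧ walkSpan h n w = a}

/-- Number of reversed bridges of length `n` and span `a` starting at `v`. -/
noncomputable def rbridgeSpanCount (G : SimpleGraph V) (h : V → ℤ) (n : ℕ) (v : V) (a : ℤ) : ℕ :=
  Nat.card {w : ℕ → V // IsRBridgeFrom G h n v w ∧ walkSpan h n w = a}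

/-- `c_n`: maximal number of SAWs of length `n` over all starting vertices. -/
noncomputable def sawSup (G : SimpleGraph V) (n : ℕ) : ℕ :=
  sSup {m | ∃ v : V, m = sawCount G n v}

/-- `b_n`: minimal number of bridges of length `n` over all starting vertices. -/
noncomputable def bridgeInf (G : SimpleGraph V) (h : V → ℤ) (n : ℕ) : ℕ :=
  sInf {m | ∃ v : V, m = bridgeCount G h n v}

/-- `b̄_n`: minimal number of reversed bridges of length `n` over all starting vertices. -/
noncomputable def rbridgeInf (G : SimpleGraph V) (h : V → ℤ) (n : ℕ) : ℕ :=
  sInf {m | ∃ v : V, m = rbridgeCount G h n v}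

/-- `idx` together with the spans `a` form the canonical decomposition of the walk `w`
of length `n` into an alternating sequence of `k` bridges and reversed bridges. -/
noncomputable def IsCanonicalDecomp (h : V → ℤ) (n : ℕ) (w : ℕ → V) (k : ℕ) (a : ℕ → ℤ)
    (idx : ℕ → ℕ) : Prop :=
  idx 0 = 0 ∧ idx k = n ∧
  ∀ j, 1 ≤ j → j ≤ k →
    idx (j - 1) < idx j ∧ idx j ≤ n ∧
    a j = |h (w (idx j)) - h (w (idx (j - 1)))| ∧
    (∀ i, idx (j - 1) ≤ i → i ≤ n → |h (w i) - h (w (idx (j - 1)))| ≤ a j) ∧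
    (∀ i, idx j < i → i ≤ n → |h (w i) - h (w (idx (j - 1)))| < a j)

/-- `h_{n,v}(a_1,…,a_k)`: number of half-space walks of length `n` from `v` whose
canonical decomposition has span sequence `a 1, …, a k`. -/
noncomputable def hswSeqCount (G : SimpleGraph V) (h : V → ℤ) (n : ℕ) (v : V) (k : ℕ)
    (a : ℕ → ℤ) : ℕ :=
  Nat.card {w : ℕ → V // IsHSWFrom G h n v w ∧ ∃ idx : ℕ → ℕ,
    IsCanonicalDecomp h n w k a idx}

/-- The group `Γ` acts quasi-transitively. -/
noncomputable def QuasiTransitiveSub (G : SimpleGraph V) (Γ : Subgroup (G ≃g G)) : Prop :=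
  ∃ S : Finset V, ∀ v : V, ∃ γ ∈ Γ, ∃ s ∈ S, γ s = v

/-- The graph `G` is quasi-transitive. -/
noncomputable def QuasiTransitive (G : SimpleGraph V) : Prop :=
  ∃ S : Finset V, ∀ v : V, ∃ γ : G ≃g G, ∃ s ∈ S, γ s = v

/-- `(h, Γ)` is a graph height function on `G`. -/
noncomputable def IsGraphHeightFunction (G : SimpleGraph V) (h : V → ℤ) (Γ : Subgroup (G ≃g G)) : Prop :=
  QuasiTransitiveSub G Γ ∧
  (∀ γ ∈ Γ, ∀ u v : V, h (γ v) - h (γ u) = h v - h u) ∧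
  (∀ v : V, ∃ u w : V, G.Adj v u ∧ G.Adj v w ∧ h u < h v ∧ h v < h w)

/-- `P_D A`: number of partitions of `A` into distinct parts. -/
noncomputable def distinctPartitionCount (A : ℕ) : ℕ := (Nat.Partition.distincts A).card

noncomputable def bridgeBeta (G : SimpleGraph V) (h : V → ℤ) : ℝ :=
  Filter.limsup (fun n : ℕ => (bridgeInf G h n : ℝ) ^ (1 / (n : ℝ))) atTop

noncomputable def rbridgeBeta (G : SimpleGraph V) (h : V → ℤ) : ℝ :=
  Filter.limsup (fun n : ℕ => (rbridgeInf G h n : ℝ) ^ (1 / (n : ℝ))) atTop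

noncomputable def betaMax (G : SimpleGraph V) (h : V → ℤ) : ℝ :=
  max (bridgeBeta G h) (rbridgeBeta G h)
/-- Vertices of the Grandparent graph: pairs `(k, f)` where `f i = false` for `i ≥ k`
and for all sufficiently small `i`. -/
def GPVertex : Type :=
  {p : ℤ × (ℤ → Bool) // (∀ i, p.1 ≤ i → p.2 i = false) ∧ ∃ N : ℤ, ∀ i ≤ N, p.2 i = false}

/-- The predecessor map of the Grandparent graph. -/
def GPpred (v : GPVertex) : GPVertex :=
  ⟨(v.val.1 - 1, fun i => if i = v.val.1 - 1 then false else v.val.2 i), by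
    constructor
    · intro i hi
      dsimp only at hi ⊢
      split
      · rfl
      · exact v.prop.1 i (by omega)
    · obtain ⟨N, hN⟩ := v.prop.2
      refine ⟨N, fun i hi => ?_⟩
      dsimp only
      split
      · rfl
      · exact hN i hi⟩

/-- The Grandparent graph. -/
def GP : SimpleGraph GPVertex where
  Adj u v := u ≠ v ∧
    (u = GPpred v ∨ v = GPpred u ∨ u = GPpred (GPpred v) ∨ v = GPpred (GPpred u))
  symm := by
    constructor
    intro u v hv
    exact ⟨Ne.symm hv.1, by tauto⟩
  loopless := by
    constructor
    intro u hu
    exact hu.1 rfl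

/-- The height of a vertex of the Grandparent graph. -/
def GPheight (v : GPVertex) : ℤ := v.val.1

/-! In `GP` a step up by one leads to one of the two children of a vertex, a step up by two to
one of its four grandchildren, while a step down by one always leads to the parent; adjacent
vertices never have the same height. Every vertex of a bridge of span `a` but the first lies at
one of the heights `h o + 1, …, h o + a`, the last one at `h o + a`. For `a = 0` nothing fits,
for `a = 1` only a single step to a child does. For `a = 2` the heights of the vertices after the
first alternate between the two levels, and a peak (up by one, then down by one) would revisit
the parent, so the only bridges are `o → gc`, `o → c → gc` and `o → gc → c → gc'` with
`gc ≠ gc'` siblings, each determined by two bits. -/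

theorem card_subtype_eq_of_injective {α β : Type*} {P : α → Prop} {F : β → α}
    (hF : Function.Injective F) (hP : ∀ a, P a ↔ a ∈ Set.range F) :
    Nat.card {a // P a} = Nat.card β :=
  Nat.card_congr ((Equiv.subtypeEquivRight hP).trans (Equiv.ofInjective F hF).symm)

section Bridges

variable {G : SimpleGraph V} {h : V → ℤ} {n : ℕ} {v : V} {w w' : ℕ → V}

theorem IsWalkFrom.ext (hw : IsWalkFrom G n v w) (hw' : IsWalkFrom G n v w')
    (heq : ∀ i, 1 ≤ i → i ≤ n → w i = w' i) : w = w' := by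
  have hle : ∀ i ≤ n, w i = w' i := fun i hi => by
    rcases Nat.eq_zero_or_pos i with rfl | hpos
    · rw [hw.1, hw'.1]
    · exact heq i hpos hi
  funext i
  rcases le_or_gt i n with hi | hi
  · exact hle i hi
  · rw [hw.2.2 i hi.le, hw'.2.2 i hi.le, hle n le_rfl]

theorem IsSAWFrom.ne (hw : IsSAWFrom G n v w) {i j : ℕ} (hi : i ≤ n) (hj : j ≤ n)
    (hij : i ≠ j) : w i ≠ w j :=
  fun heq => hij (hw.2 (Set.mem_Iic.2 hi) (Set.mem_Iic.2 hj) heq)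

theorem SimpleGraph.Walk.IsPath.isSAWFrom {u : V} {p : G.Walk v u} (hp : p.IsPath)
    (hn : p.length = n) : IsSAWFrom G n v p.getVert := by
  subst hn
  exact ⟨⟨p.getVert_zero, fun _ hi => p.adj_getVert_succ hi,
    fun _ hi => by rw [p.getVert_of_length_le hi, p.getVert_length]⟩, hp.getVert_injOn⟩

theorem IsBridgeFrom.adj (hb : IsBridgeFrom G h n v w) (i : ℕ) (hi : i < n) :
    G.Adj (w i) (w (i + 1)) :=
  hb.1.1.2.1 i hi

theorem IsBridgeFrom.adj_zero (hb : IsBridgeFrom G h n v w) (hn : 0 < n) : G.Adj v (w 1) :=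
  hb.1.1.1 ▸ hb.adj 0 hn

theorem IsBridgeFrom.walkSpan_eq (hb : IsBridgeFrom G h n v w) :
    walkSpan h n w = h (w n) - h (w 0) := by
  have hmax : ∀ i ∈ range (n + 1), h (w i) ≤ h (w n) := fun i hi => by
    rcases Nat.eq_zero_or_pos i with rfl | hpos
    · rcases Nat.eq_zero_or_pos n with rfl | hn
      · exact le_rfl
      · exact (hb.2 n hn le_rfl).1.le
    · exact (hb.2 i hpos (Nat.lt_succ_iff.1 (mem_range.1 hi))).2
  have hmin : ∀ i ∈ range (n + 1), h (w 0) ≤ h (w i) := fun i hi => by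
    rcases Nat.eq_zero_or_pos i with rfl | hpos
    · exact le_rfl
    · exact (hb.2 i hpos (Nat.lt_succ_iff.1 (mem_range.1 hi))).1.le
  unfold walkSpan
  rw [le_antisymm (sup'_le _ _ hmax) (le_sup' (fun i => h (w i)) (by simp)),
    le_antisymm (inf'_le (fun i => h (w i)) (by simp)) (le_inf' _ _ hmin)]

theorem IsBridgeFrom.height_bounds (hb : IsBridgeFrom G h n v w) {a : ℤ}
    (ha : walkSpan h n w = a) {i : ℕ} (hi₁ : 1 ≤ i) (hi : i ≤ n) :
    h v < h (w i) ∧ h (w i) ≤ h v + a := by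
  have hv : w 0 = v := hb.1.1.1
  have := hb.2 i hi₁ hi
  rw [hb.walkSpan_eq, hv] at ha
  rw [hv] at this
  omega

theorem IsBridgeFrom.height_last (hb : IsBridgeFrom G h n v w) {a : ℤ}
    (ha : walkSpan h n w = a) : h (w n) = h v + a := by
  rw [hb.walkSpan_eq, hb.1.1.1] at ha
  omega

theorem SimpleGraph.Walk.IsPath.isBridgeFrom {u : V} {p : G.Walk v u} (hp : p.IsPath)
    (hn : p.length = n)
    (hh : ∀ i, 1 ≤ i → i ≤ n → h v < h (p.getVert i) ∧ h (p.getVert i) ≤ h u) :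
    IsBridgeFrom G h n v p.getVert ∧ walkSpan h n p.getVert = h u - h v := by
  subst hn
  have hb : IsBridgeFrom G h p.length v p.getVert :=
    ⟨hp.isSAWFrom rfl, by simpa only [p.getVert_zero, p.getVert_length] using hh⟩
  refine ⟨hb, ?_⟩
  rw [hb.walkSpan_eq, p.getVert_zero, p.getVert_length]

theorem bridgeSpanCount_length_zero (G : SimpleGraph V) (h : V → ℤ) (v : V) (a : ℤ) :
    bridgeSpanCount G h 0 v a = if a = 0 then 1 else 0 := by
  have hnil : (SimpleGraph.Walk.nil : G.Walk v v).IsPath := .nil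
  split_ifs with ha
  · subst ha
    refine (card_subtype_eq_of_injective (F := fun _ : Unit => fun _ : ℕ => v)
      (fun _ _ _ => rfl) fun w => ?_).trans Nat.card_unique
    constructor
    · rintro ⟨hb, -⟩
      exact ⟨(), (IsWalkFrom.ext hb.1.1 (hnil.isSAWFrom rfl).1 fun i hi₁ hi => by omega).symm⟩
    · rintro ⟨-, rfl⟩
      have := hnil.isBridgeFrom (h := h) (n := 0) rfl fun i hi₁ hi => by omega
      rwa [sub_self] at this
  · refine Nat.card_eq_zero.2 (.inl ⟨fun ⟨w, _, hs⟩ => ha ?_⟩)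
    simpa [walkSpan] using hs.symm

theorem bridgeSpanCount_span_zero_of_pos (G : SimpleGraph V) (h : V → ℤ) (v : V)
    (hn : 0 < n) : bridgeSpanCount G h n v 0 = 0 :=
  Nat.card_eq_zero.2 <| .inl ⟨fun ⟨_, hb, hs⟩ => by
    have := hb.height_bounds hs hn le_rfl
    omega⟩

theorem bridgeSpanCount_length_one {a : ℤ} (ha : 0 < a) :
    bridgeSpanCount G h 1 v a = Nat.card {u // G.Adj v u ∧ h u = h v + a} := by
  have hpath {u : V} (hadj : G.Adj v u) : (SimpleGraph.Walk.cons hadj .nil).IsPath :=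
    (SimpleGraph.Walk.cons_isPath_iff hadj .nil).2 ⟨.nil, by simpa using hadj.ne⟩
  refine card_subtype_eq_of_injective
    (F := fun u : {u // G.Adj v u ∧ h u = h v + a} => (SimpleGraph.Walk.cons u.2.1 .nil).getVert)
    (fun u u' huu' => Subtype.ext (by simpa using congrFun huu' 1)) fun w => ⟨?_, ?_⟩
  · rintro ⟨hb, hs⟩
    have hadj := hb.adj_zero one_pos
    refine ⟨⟨w 1, hadj, hb.height_last hs⟩, ?_⟩
    refine (IsWalkFrom.ext hb.1.1 ((hpath hadj).isSAWFrom rfl).1 fun i hi₁ hi => ?_).symm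
    obtain rfl : i = 1 := by omega
    simp
  · rintro ⟨⟨u, hadj, hu⟩, rfl⟩
    have := (hpath hadj).isBridgeFrom (h := h) (n := 1) rfl fun i hi₁ hi => by
      obtain rfl : i = 1 := by omega
      simp only [SimpleGraph.Walk.getVert_cons_succ, SimpleGraph.Walk.getVert_zero]
      omega
    simpa [hu] using this

theorem bridgeSpanCount_span_one_of_two_le (hG : ∀ u u', G.Adj u u' → h u ≠ h u')
    (hn : 2 ≤ n) : bridgeSpanCount G h n v 1 = 0 :=
  Nat.card_eq_zero.2 <| .inl ⟨fun ⟨w, hb, hs⟩ => by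
    have hadj : G.Adj (w 1) (w 2) := hb.adj 1 (by omega)
    have h₁ := hb.height_bounds hs le_rfl (by omega)
    have h₂ := hb.height_bounds hs (by omega) hn
    exact hG _ _ hadj (by omega)⟩

end Bridges

namespace GPVertex

theorem ext' {u v : GPVertex} (hk : u.val.1 = v.val.1) (hf : ∀ i, u.val.2 i = v.val.2 i) :
    u = v :=
  Subtype.ext (Prod.ext hk (funext hf))

def child (v : GPVertex) (b : Bool) : GPVertex :=
  ⟨(v.val.1 + 1, fun i => if i = v.val.1 then b else v.val.2 i), by
    constructor
    · intro i hi
      dsimp only at hi ⊢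
      rw [if_neg (by omega)]
      exact v.prop.1 i (by omega)
    · obtain ⟨N, hN⟩ := v.prop.2
      refine ⟨min N (v.val.1 - 1), fun i hi => ?_⟩
      dsimp only
      rw [if_neg (by omega)]
      exact hN i (by omega)⟩

@[simp]
theorem GPheight_child (v : GPVertex) (b : Bool) : GPheight (v.child b) = GPheight v + 1 :=
  rfl

@[simp]
theorem GPheight_GPpred (v : GPVertex) : GPheight (GPpred v) = GPheight v - 1 :=
  rfl

@[simp]
theorem GPpred_child (v : GPVertex) (b : Bool) : GPpred (v.child b) = v := by
  refine ext' (by simp [GPpred, child]) fun i => ?_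
  simp only [GPpred, child, add_sub_cancel_right]
  split_ifs with hi
  · exact (v.prop.1 i hi.ge).symm
  · rfl

theorem eq_child_of_GPpred_eq {u v : GPVertex} (h : GPpred u = v) :
    u = v.child (u.val.2 v.val.1) := by
  subst h
  refine ext' (by simp [GPpred, child]) fun i => ?_
  simp only [GPpred, child]
  split_ifs with hi <;> simp [hi]

theorem child_injective (v : GPVertex) : Function.Injective v.child := fun b b' h => by
  simpa [child] using congrArg (fun u : GPVertex => u.val.2 v.val.1) h

@[simp]
theorem child_inj {v : GPVertex} {b b' : Bool} : v.child b = v.child b' ↔ b = b' :=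
  v.child_injective.eq_iff

theorem child_child_injective (v : GPVertex) :
    Function.Injective fun b : Bool × Bool => (v.child b.1).child b.2 := by
  rintro ⟨b₁, b₂⟩ ⟨b₁', b₂'⟩ h
  obtain rfl := v.child_injective (by simpa using congrArg GPpred h)
  obtain rfl := (v.child b₁).child_injective h
  rfl

theorem adj_child (v : GPVertex) (b : Bool) : GP.Adj v (v.child b) :=
  ⟨fun h => by simpa using congrArg GPheight h, .inl (GPpred_child v b).symm⟩

theorem adj_child_child (v : GPVertex) (b₁ b₂ : Bool) : GP.Adj v ((v.child b₁).child b₂) :=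
  ⟨fun h => by simpa [add_assoc] using congrArg GPheight h, .inr (.inr (.inl (by simp)))⟩

end GPVertex

open GPVertex

theorem GPheight_ne_of_adj {u v : GPVertex} (h : GP.Adj u v) : GPheight u ≠ GPheight v := by
  rcases h.2 with rfl | rfl | rfl | rfl <;> simp only [GPheight_GPpred] <;> omega

theorem eq_GPpred_of_adj {u v : GPVertex} (h : GP.Adj u v)
    (hh : GPheight v = GPheight u + 1) : u = GPpred v := by
  rcases h.2 with h' | rfl | rfl | rfl
  · exact h'
  all_goals simp only [GPheight_GPpred] at hh; omega

theorem eq_GPpred_GPpred_of_adj {u v : GPVertex} (h : GP.Adj u v)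
    (hh : GPheight v = GPheight u + 2) : u = GPpred (GPpred v) := by
  rcases h.2 with rfl | rfl | h' | rfl
  · simp only [GPheight_GPpred] at hh; omega
  · simp only [GPheight_GPpred] at hh; omega
  · exact h'
  · simp only [GPheight_GPpred] at hh; omega

theorem GP_adj_and_GPheight_add_one_iff {v u : GPVertex} :
    GP.Adj v u ∧ GPheight u = GPheight v + 1 ↔ u ∈ Set.range v.child := by
  constructor
  · rintro ⟨hadj, hh⟩
    exact ⟨_, (eq_child_of_GPpred_eq (eq_GPpred_of_adj hadj hh).symm).symm⟩
  · rintro ⟨b, rfl⟩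
    exact ⟨v.adj_child b, GPheight_child v b⟩

theorem GP_adj_and_GPheight_add_two_iff {v u : GPVertex} :
    GP.Adj v u ∧ GPheight u = GPheight v + 2 ↔
      u ∈ Set.range fun b : Bool × Bool => (v.child b.1).child b.2 := by
  constructor
  · rintro ⟨hadj, hh⟩
    obtain ⟨b₁, hb₁⟩ : ∃ b₁, GPpred u = v.child b₁ :=
      ⟨_, eq_child_of_GPpred_eq (eq_GPpred_GPpred_of_adj hadj hh).symm⟩
    obtain ⟨b₂, hb₂⟩ : ∃ b₂, u = (GPpred u).child b₂ := ⟨_, eq_child_of_GPpred_eq rfl⟩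
    exact ⟨(b₁, b₂), (hb₂.trans (congrArg (·.child b₂) hb₁)).symm⟩
  · rintro ⟨b, rfl⟩
    exact ⟨v.adj_child_child b.1 b.2, by simp; ring⟩

namespace GPVertex

def walkChildChild (o : GPVertex) (b : Bool × Bool) : GP.Walk o ((o.child b.1).child b.2) :=
  .cons (o.adj_child b.1) (.cons ((o.child b.1).adj_child b.2) .nil)

def walkZigzag (o : GPVertex) (b : Bool × Bool) : GP.Walk o ((o.child b.1).child !b.2) :=
  .cons (o.adj_child_child b.1 b.2)
    (.cons ((o.child b.1).adj_child b.2).symm (.cons ((o.child b.1).adj_child !b.2) .nil))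

theorem isPath_walkChildChild (o : GPVertex) (b : Bool × Bool) :
    (o.walkChildChild b).IsPath := by
  simp only [walkChildChild, SimpleGraph.Walk.cons_isPath_iff, SimpleGraph.Walk.isPath_iff_nil,
    SimpleGraph.Walk.nil_nil, SimpleGraph.Walk.support_nil, SimpleGraph.Walk.support_cons,
    List.mem_cons, List.not_mem_nil, or_false, true_and, not_or]
  and_intros <;> exact ne_of_apply_ne GPheight (by simp [add_assoc])

theorem isPath_walkZigzag (o : GPVertex) (b : Bool × Bool) : (o.walkZigzag b).IsPath := by
  simp only [walkZigzag, SimpleGraph.Walk.cons_isPath_iff, SimpleGraph.Walk.isPath_iff_nil,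
    SimpleGraph.Walk.nil_nil, SimpleGraph.Walk.support_nil, SimpleGraph.Walk.support_cons,
    List.mem_cons, List.not_mem_nil, or_false, true_and, not_or, child_inj, Bool.eq_not_self,
    or_self]
  and_intros <;> exact ne_of_apply_ne GPheight (by simp [add_assoc])

end GPVertex

section Counts

variable (o : GPVertex)

theorem bridgeSpanCount_GP_length_one_span_one : bridgeSpanCount GP GPheight 1 o 1 = 2 := by
  rw [bridgeSpanCount_length_one one_pos,
    card_subtype_eq_of_injective o.child_injective fun _ => GP_adj_and_GPheight_add_one_iff]
  simp

theorem bridgeSpanCount_GP_length_one_span_two : bridgeSpanCount GP GPheight 1 o 2 = 4 := by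
  rw [bridgeSpanCount_length_one two_pos,
    card_subtype_eq_of_injective o.child_child_injective fun _ => GP_adj_and_GPheight_add_two_iff]
  simp

theorem bridgeSpanCount_GP_length_two_span_two : bridgeSpanCount GP GPheight 2 o 2 = 4 := by
  refine (card_subtype_eq_of_injective (F := fun b => (o.walkChildChild b).getVert)
    (fun b b' hbb' => o.child_child_injective (by simpa [walkChildChild] using congrFun hbb' 2))
    fun w => ⟨?_, ?_⟩).trans (by simp)
  · rintro ⟨hb, hs⟩
    have hadj₀₁ := hb.adj_zero (by omega)
    have hadj₁₂ : GP.Adj (w 1) (w 2) := hb.adj 1 (by omega)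
    have h₁ := hb.height_bounds hs (i := 1) le_rfl (by omega)
    have h₂ := hb.height_last hs
    have := GPheight_ne_of_adj hadj₁₂
    obtain ⟨b₁, hb₁⟩ := GP_adj_and_GPheight_add_one_iff.1 ⟨hadj₀₁, by omega⟩
    obtain ⟨b₂, hb₂⟩ := GP_adj_and_GPheight_add_one_iff.1 ⟨hadj₁₂, by omega⟩
    have hpath := (o.isPath_walkChildChild (b₁, b₂)).isSAWFrom rfl
    refine ⟨(b₁, b₂), (IsWalkFrom.ext hb.1.1 hpath.1 fun i hi₁ hi => ?_).symm⟩
    interval_cases i <;> simp [walkChildChild, hb₁, hb₂]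
  · rintro ⟨b, rfl⟩
    have := (o.isPath_walkChildChild b).isBridgeFrom (h := GPheight) (n := 2) rfl
      fun i hi₁ hi => by interval_cases i <;> simp [walkChildChild]
    simpa [add_assoc] using this

theorem bridgeSpanCount_GP_length_three_span_two : bridgeSpanCount GP GPheight 3 o 2 = 4 := by
  refine (card_subtype_eq_of_injective (F := fun b => (o.walkZigzag b).getVert)
    (fun b b' hbb' => o.child_child_injective (by simpa [walkZigzag] using congrFun hbb' 1))
    fun w => ⟨?_, ?_⟩).trans (by simp)
  · rintro ⟨hb, hs⟩
    have hadj₀₁ := hb.adj_zero (by omega)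
    have hadj₁₂ : GP.Adj (w 1) (w 2) := hb.adj 1 (by omega)
    have hadj₂₃ : GP.Adj (w 2) (w 3) := hb.adj 2 (by omega)
    have h₁ := hb.height_bounds hs (i := 1) le_rfl (by omega)
    have h₂ := hb.height_bounds hs (i := 2) (by omega) (by omega)
    have h₃ := hb.height_last hs
    have := GPheight_ne_of_adj hadj₁₂
    have := GPheight_ne_of_adj hadj₂₃
    obtain ⟨⟨b₁, b₂⟩, hb₁₂⟩ := GP_adj_and_GPheight_add_two_iff.1 ⟨hadj₀₁, by omega⟩
    have hw₂ : w 2 = o.child b₁ := by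
      rw [eq_GPpred_of_adj hadj₁₂.symm (by omega), ← hb₁₂, GPpred_child]
    obtain ⟨b₃, hw₃⟩ := GP_adj_and_GPheight_add_one_iff.1 ⟨hadj₂₃, by omega⟩
    rw [hw₂] at hw₃
    have hb₃ : b₃ = !b₂ := Bool.eq_not.2 fun h => hb.1.ne (i := 3) (j := 1) le_rfl (by omega)
      (by omega) (by rw [← hw₃, ← hb₁₂, h])
    have hpath := (o.isPath_walkZigzag (b₁, b₂)).isSAWFrom rfl
    refine ⟨(b₁, b₂), (IsWalkFrom.ext hb.1.1 hpath.1 fun i hi₁ hi => ?_).symm⟩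
    interval_cases i <;> simp [walkZigzag, ← hb₁₂, hw₂, ← hw₃, hb₃]
  · rintro ⟨b, rfl⟩
    have := (o.isPath_walkZigzag b).isBridgeFrom (h := GPheight) (n := 3) rfl
      fun i hi₁ hi => by interval_cases i <;> simp [walkZigzag]
    simpa [add_assoc] using this

theorem bridgeSpanCount_GP_span_two_of_four_le {n : ℕ} (hn : 4 ≤ n) :
    bridgeSpanCount GP GPheight n o 2 = 0 :=
  Nat.card_eq_zero.2 <| .inl ⟨fun ⟨w, hb, hs⟩ => by
    have hadj₁₂ : GP.Adj (w 1) (w 2) := hb.adj 1 (by omega)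
    have hadj₂₃ : GP.Adj (w 2) (w 3) := hb.adj 2 (by omega)
    have hadj₃₄ : GP.Adj (w 3) (w 4) := hb.adj 3 (by omega)
    have h₁ := hb.height_bounds hs (i := 1) le_rfl (by omega)
    have h₂ := hb.height_bounds hs (i := 2) (by omega) (by omega)
    have h₃ := hb.height_bounds hs (i := 3) (by omega) (by omega)
    have h₄ := hb.height_bounds hs (i := 4) (by omega) hn
    have := GPheight_ne_of_adj hadj₁₂
    have := GPheight_ne_of_adj hadj₂₃
    have := GPheight_ne_of_adj hadj₃₄
    -- the heights of `w 1, …, w 4` alternate between `h o + 1` and `h o + 2`, and stepping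
    -- down by one from a vertex always leads to its parent
    rcases (by omega : GPheight (w 2) = GPheight (w 1) + 1 ∧ GPheight (w 2) = GPheight (w 3) + 1 ∨
        GPheight (w 3) = GPheight (w 2) + 1 ∧ GPheight (w 3) = GPheight (w 4) + 1) with
      ⟨k₁, k₂⟩ | ⟨k₁, k₂⟩
    · exact hb.1.ne (i := 1) (j := 3) (by omega) (by omega) (by omega)
        ((eq_GPpred_of_adj hadj₁₂ k₁).trans (eq_GPpred_of_adj hadj₂₃.symm k₂).symm)
    · exact hb.1.ne (i := 2) (j := 4) (by omega) (by omega) (by omega)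
        ((eq_GPpred_of_adj hadj₂₃ k₁).trans (eq_GPpred_of_adj hadj₃₄.symm k₂).symm)⟩

end Counts

/-- In `GP`: `ℬ₀(x) = 1`, `ℬ₁(x) = 2x`, `ℬ₂(x) = 4x + 4x² + 4x³`,
coefficientwise. -/
theorem statement_16 (o : GPVertex) :
    (∀ n : ℕ, bridgeSpanCount GP GPheight n o 0 = if n = 0 then 1 else 0) ∧
    (∀ n : ℕ, bridgeSpanCount GP GPheight n o 1 = if n = 1 then 2 else 0) ∧
    (∀ n : ℕ, bridgeSpanCount GP GPheight n o 2 =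
      if n = 1 ∨ n = 2 ∨ n = 3 then 4 else 0) := by
  refine ⟨fun n => ?_, fun n => ?_, fun n => ?_⟩
  · rcases Nat.eq_zero_or_pos n with rfl | hn
    · simp [bridgeSpanCount_length_zero]
    · simp [bridgeSpanCount_span_zero_of_pos GP GPheight o hn, hn.ne']
  · rcases n with _ | _ | n
    · simp [bridgeSpanCount_length_zero]
    · simp [bridgeSpanCount_GP_length_one_span_one]
    · simp [bridgeSpanCount_span_one_of_two_le (fun _ _ => GPheight_ne_of_adj)]
  · rcases n with _ | _ | _ | _ | n
    · simp [bridgeSpanCount_length_zero]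
    · simp [bridgeSpanCount_GP_length_one_span_two]
    · simp [bridgeSpanCount_GP_length_two_span_two]
    · simp [bridgeSpanCount_GP_length_three_span_two]
    · simp [bridgeSpanCount_GP_span_two_of_four_le]
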